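/- arXiv:0803.0471 — 6 statements merged into one kernel-verified Lean document; each statement's English description precedes it below -/
import Mathlib

section
/- Let h be the class number of K and let z ≥ 1 be a real number. If a nonzero principal ideal I of 𝒪_K is a product of finitely many prime ideals of 𝒪_K, each of norm at most z, then I is a product of finitely many nonzero principal ideals of 𝒪_K, each of norm at most z^h. -/
/-!
Order the prime factors of `I` in a list. Among the `h + 1` classes of its first `0, 1, …, h`
prefix products two coincide (pigeonhole in the class group), so some block of at most `h`
consecutive factors has principal product; its norm is at most `z ^ h`. Splitting this block
off leaves a shorter product that is still principal, and we recurse.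
-/

open NumberField
open scoped nonZeroDivisors

theorem List.exists_infix_map_prod_eq_one {M G : Type*} [Monoid M] [Group G] [Fintype G]
    (φ : M →* G) (l : List M) (hl : Fintype.card G ≤ l.length) :
    ∃ b, b <:+: l ∧ b ≠ [] ∧ b.length ≤ Fintype.card G ∧ φ b.prod = 1 := by
  obtain ⟨i, j, hij, hφ⟩ := Fintype.exists_ne_map_eq_of_card_lt
    (fun k : Fin (Fintype.card G + 1) => φ (l.take k).prod) (by simp)
  wlog hlt : (i : ℕ) < j generalizing i j
  · exact this j i hij.symm hφ.symm (by omega)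
  have htake : l.take j = l.take i ++ (l.drop i).take (j - i) := by
    rw [← List.take_add, Nat.add_sub_cancel' hlt.le]
  refine ⟨(l.drop i).take (j - i), ⟨l.take i, l.drop j, ?_⟩, by simp; omega, by simp; omega,
    ?_⟩
  · rw [← htake, List.take_append_drop]
  · simpa [htake] using hφ

theorem Multiset.exists_le_map_prod_eq_one {M G : Type*} [CommMonoid M] [Group G] [Fintype G]
    (φ : M →* G) (s : Multiset M) (hs : Fintype.card G ≤ card s) :
    ∃ u ≤ s, u ≠ 0 ∧ card u ≤ Fintype.card G ∧ φ u.prod = 1 := by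
  induction s using Quotient.inductionOn with
  | h l =>
  obtain ⟨b, hbl, hb, hcard, hφ⟩ := l.exists_infix_map_prod_eq_one φ hs
  exact ⟨b, Multiset.coe_le.mpr hbl.sublist.subperm, by simpa using hb, hcard, by simpa using hφ⟩

theorem Multiset.exists_sum_eq_and_card_le_of_map_prod_eq_one {M G : Type*} [CommMonoid M]
    [Group G] [Fintype G] (φ : M →* G) (s : Multiset M) (hs : φ s.prod = 1) :
    ∃ T : Multiset (Multiset M), T.sum = s ∧
      ∀ u ∈ T, card u ≤ Fintype.card G ∧ φ u.prod = 1 := by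
  induction s using Multiset.strongInductionOn with
  | _ s ih =>
  by_cases hcard : card s ≤ Fintype.card G
  · exact ⟨{s}, by simp, by simpa using ⟨hcard, hs⟩⟩
  obtain ⟨u, hus, hu, hucard, hφu⟩ := s.exists_le_map_prod_eq_one φ (by omega)
  obtain ⟨r, rfl⟩ := exists_add_of_le hus
  have hφr : φ r.prod = 1 := by simpa [hφu] using hs
  obtain ⟨T, hT, hTφ⟩ := ih r (lt_add_of_pos_left r (pos_iff_ne_zero.mpr hu)) hφr
  exact ⟨u ::ₘ T, by simp [hT], by simpa [hucard, hφu] using hTφ⟩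

theorem Ideal.absNorm_multiset_prod_le_pow {R : Type*} [CommRing R] [IsDedekindDomain R]
    [Module.Free ℤ R] {z : ℝ} (s : Multiset (Ideal R))
    (hs : ∀ P ∈ s, (absNorm P : ℝ) ≤ z) : (absNorm s.prod : ℝ) ≤ z ^ Multiset.card s := by
  rw [map_multiset_prod, Nat.cast_multiset_prod, Multiset.map_map, ← Multiset.prod_replicate,
    ← Multiset.map_const']
  exact Multiset.prod_map_le_prod_map₀ _ _ (fun _ _ => Nat.cast_nonneg _) hs

/-- Let `h` be the class number of `K` and `z ≥ 1`.  If a nonzero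
principal ideal `I` of `𝒪_K` is a product of finitely many prime ideals, each of norm at
most `z`, then `I` is a product of finitely many nonzero principal ideals, each of norm
at most `z^h`. -/
theorem smoothness_roots_stmt4 (K : Type) [Field K] [NumberField K]
    (z : ℝ) (hz : 1 ≤ z)
    (I : Ideal (𝓞 K)) (hIprin : I.IsPrincipal) (hIbot : I ≠ ⊥)
    (s : Multiset (Ideal (𝓞 K)))
    (hs : ∀ P ∈ s, P.IsPrime ∧ (Ideal.absNorm P : ℝ) ≤ z)
    (hprod : I = s.prod) :
    ∃ t : Multiset (Ideal (𝓞 K)),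
      (∀ J ∈ t, J.IsPrincipal ∧ J ≠ ⊥ ∧
        (Ideal.absNorm J : ℝ) ≤ z ^ (NumberField.classNumber K)) ∧
      I = t.prod := by
  have hs0 : ∀ P ∈ s, P ∈ (Ideal (𝓞 K))⁰ := fun P hP =>
    mem_nonZeroDivisors_of_ne_zero fun hP0 => hIbot (hprod ▸ Multiset.prod_eq_zero (hP0 ▸ hP))
  lift s to Multiset (Ideal (𝓞 K))⁰ using hs0
  rw [← Submonoid.coe_multiset_prod] at hprod
  obtain ⟨T, rfl, hT⟩ := s.exists_sum_eq_and_card_le_of_map_prod_eq_one ClassGroup.mk0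
    ((ClassGroup.mk0_eq_one_iff _).mpr (hprod ▸ hIprin))
  refine ⟨T.map fun u => (u.prod : Ideal (𝓞 K)), ?_, ?_⟩
  · simp only [Multiset.mem_map, forall_exists_index, and_imp]
    rintro _ u hu rfl
    refine ⟨(ClassGroup.mk0_eq_one_iff _).mp (hT u hu).2, nonZeroDivisors.coe_ne_zero _, ?_⟩
    rw [Submonoid.coe_multiset_prod]
    have hu_le : u.map Subtype.val ≤ (T.sum).map Subtype.val :=
      Multiset.map_le_map (Multiset.le_sum_of_mem hu)
    calc _ ≤ z ^ Multiset.card u := by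
          simpa using Ideal.absNorm_multiset_prod_le_pow _ fun P hP =>
            (hs P (Multiset.subset_of_le hu_le hP)).2
      _ ≤ z ^ classNumber K := pow_le_pow_right₀ hz (hT u hu).1
  · rw [hprod, ← Multiset.join, Multiset.prod_join, Submonoid.coe_multiset_prod, Multiset.map_map]
    rfl
end

section
/- For all real x > 0 and y ≥ 1, one has ψ'_K(x, y^(1/h)) ≤ ψ̃_K(x, y), where h is the class number of K. That is, every nonzero principal ideal of norm at most x that is a product of prime ideals of norm at most y^(1/h) is also a product of principal ideals of norm at most y. -/
set_option synthInstance.maxHeartbeats 1000000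
set_option maxHeartbeats 1000000

open NumberField

/-- `ψ'_K(x, y)`: the number of nonzero principal ideals of `𝒪_K` of norm at most `x`
that are products of prime ideals of norm at most `y`. -/
noncomputable def psiPrimeK (K : Type) [Field K] [NumberField K] (x y : ℝ) : ℕ :=
  Set.ncard {I : Ideal (𝓞 K) | I ≠ ⊥ ∧ I.IsPrincipal ∧ (Ideal.absNorm I : ℝ) ≤ x ∧
    ∃ s : Multiset (Ideal (𝓞 K)),
      (∀ P ∈ s, P.IsPrime ∧ (Ideal.absNorm P : ℝ) ≤ y) ∧ I = s.prod}

/-- `ψ̃_K(x, y)`: the number of nonzero principal ideals of `𝒪_K` of norm at most `x` that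
are products of principal ideals of norm at most `y`. -/
noncomputable def psiTildeK (K : Type) [Field K] [NumberField K] (x y : ℝ) : ℕ :=
  Set.ncard {I : Ideal (𝓞 K) | I ≠ ⊥ ∧ I.IsPrincipal ∧ (Ideal.absNorm I : ℝ) ≤ x ∧
    ∃ s : Multiset (Ideal (𝓞 K)),
      (∀ J ∈ s, J.IsPrincipal ∧ (Ideal.absNorm J : ℝ) ≤ y) ∧ I = s.prod}

open scoped nonZeroDivisors

/-! Send each factor to its ideal class. Among the `h + 1` prefix products of any `h` factors two
classes coincide by pigeonhole, so some nonempty block of at most `h` consecutive factors has trivial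
class: its product is a principal ideal of norm at most `(y ^ (1 / h)) ^ h = y`. Removing the block
leaves a product that is still principal, and induction splits the whole factorization into such
blocks. -/

namespace Multiset

variable {α G : Type*} [CommGroup G] [Finite G]

theorem exists_le_card_le_map_prod_eq_one (f : α → G) (s : Multiset α)
    (hs : Nat.card G ≤ card s) :
    ∃ u ≤ s, u ≠ 0 ∧ card u ≤ Nat.card G ∧ (u.map f).prod = 1 := by
  set l := s.toList
  let prefixProd : Fin (Nat.card G + 1) → G := fun k => ((l.take k).map f).prod
  have hnotinj : ¬ prefixProd.Injective := fun hinj => by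
    simpa using Nat.card_le_card_of_injective prefixProd hinj
  obtain ⟨i, j, hij, hne⟩ := Function.not_injective_iff.mp hnotinj
  wlog hlt : i < j generalizing i j
  · exact this j i hij.symm hne.symm (hne.lt_or_gt.resolve_left hlt)
  have hlen : l.length = card s := length_toList s
  refine ⟨↑((l.take j).drop i), ?_, ?_, ?_, ?_⟩
  · rw [← coe_toList s]
    exact coe_le.mpr ((List.drop_sublist _ _).trans (List.take_sublist _ _)).subperm
  · simp only [ne_eq, coe_eq_zero, List.drop_eq_nil_iff, List.length_take]
    omega
  · simp only [coe_card, List.length_drop, List.length_take]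
    omega
  · have happend : l.take j = l.take i ++ (l.take j).drop i := by
      conv_lhs => rw [← List.take_append_drop i (l.take j)]
      rw [List.take_take, min_eq_left (by exact_mod_cast hlt.le)]
    have hsplit : prefixProd j = prefixProd i * (((l.take j).drop i).map f).prod := by
      simp only [prefixProd]
      nth_rw 1 [happend]
      rw [List.map_append, List.prod_append]
    simpa [hij] using hsplit.symm

theorem exists_join_eq_forall_card_le_map_prod_eq_one (f : α → G) (s : Multiset α)
    (hs : (s.map f).prod = 1) :
    ∃ t : Multiset (Multiset α), t.join = s ∧
      ∀ u ∈ t, card u ≤ Nat.card G ∧ (u.map f).prod = 1 := by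
  classical
  induction s using strongInductionOn with
  | ih s ih =>
    by_cases hcard : card s ≤ Nat.card G
    · exact ⟨{s}, singleton_join s, by simpa using ⟨hcard, hs⟩⟩
    obtain ⟨u, hus, hu0, hucard, hu⟩ :=
      exists_le_card_le_map_prod_eq_one f s (not_le.mp hcard).le
    have hsplit : s - u + u = s := tsub_add_cancel_of_le hus
    have hrest : ((s - u).map f).prod = 1 := by
      rw [← hsplit, map_add, prod_add, hu, mul_one] at hs
      exact hs
    have hlt : s - u < s :=
      (lt_add_of_pos_right (s - u) (pos_iff_ne_zero.mpr hu0)).trans_eq hsplit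
    obtain ⟨t, hts, ht⟩ := ih (s - u) hlt hrest
    refine ⟨u ::ₘ t, by rw [join_cons, hts, add_comm, hsplit], ?_⟩
    rintro v hv
    rcases mem_cons.mp hv with rfl | hv
    exacts [⟨hucard, hu⟩, ht v hv]

end Multiset

namespace Ideal

variable {R : Type*} [CommRing R] [IsDedekindDomain R]

theorem exists_join_eq_forall_card_le_isPrincipal [Finite (ClassGroup R)]
    (s : Multiset (Ideal R)) (hs0 : ⊥ ∉ s) (hs : s.prod.IsPrincipal) :
    ∃ t : Multiset (Multiset (Ideal R)), t.join = s ∧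
      ∀ u ∈ t, Multiset.card u ≤ Nat.card (ClassGroup R) ∧ u.prod.IsPrincipal := by
  lift s to Multiset (Ideal R)⁰ using
    fun P hP => mem_nonZeroDivisors_of_ne_zero (ne_of_mem_of_not_mem hP hs0)
  have isPrincipal_iff (u : Multiset (Ideal R)⁰) :
      (u.map Subtype.val).prod.IsPrincipal ↔ (u.map (ClassGroup.mk0 (R := R))).prod = 1 := by
    rw [← Submonoid.coe_multiset_prod, ← map_multiset_prod, ClassGroup.mk0_eq_one_iff]
  obtain ⟨t, hts, ht⟩ :=
    Multiset.exists_join_eq_forall_card_le_map_prod_eq_one _ s ((isPrincipal_iff s).mp hs)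
  refine ⟨t.map (Multiset.map Subtype.val), by rw [← Multiset.map_join, hts], ?_⟩
  simp only [Multiset.mem_map, forall_exists_index, and_imp]
  rintro _ u hu rfl
  exact ⟨(Multiset.card_map _ _).trans_le (ht u hu).1, (isPrincipal_iff u).mpr (ht u hu).2⟩

theorem absNorm_multiset_prod_le_pow_card [Module.Free ℤ R] (u : Multiset (Ideal R)) {n : ℕ}
    (hu : ∀ P ∈ u, absNorm P ≤ n) : absNorm u.prod ≤ n ^ Multiset.card u := by
  rw [map_multiset_prod, ← Multiset.card_map absNorm u]
  exact Multiset.prod_le_pow_card _ n (Multiset.forall_mem_map_iff.mpr hu)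

theorem exists_prod_eq_forall_isPrincipal_absNorm_le [Module.Free ℤ R] [Finite (ClassGroup R)]
    (s : Multiset (Ideal R)) (hs0 : ⊥ ∉ s) (hs : s.prod.IsPrincipal) {n : ℕ} (hn : 1 ≤ n)
    (hsn : ∀ P ∈ s, absNorm P ≤ n) :
    ∃ t : Multiset (Ideal R), (∀ J ∈ t, J.IsPrincipal ∧
      absNorm J ≤ n ^ Nat.card (ClassGroup R)) ∧ s.prod = t.prod := by
  obtain ⟨t, rfl, ht⟩ := exists_join_eq_forall_card_le_isPrincipal s hs0 hs
  refine ⟨t.map Multiset.prod, ?_, Multiset.prod_join⟩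
  simp only [Multiset.mem_map, forall_exists_index, and_imp]
  rintro _ u hu rfl
  refine ⟨(ht u hu).2, (absNorm_multiset_prod_le_pow_card (n := n) u fun P hP => ?_).trans ?_⟩
  · exact hsn P (Multiset.mem_join.mpr ⟨u, hu, hP⟩)
  · exact Nat.pow_le_pow_right hn (ht u hu).1

end Ideal

theorem smoothness_roots_stmt5_general (K : Type) [Field K] [NumberField K]
    (x y : ℝ) (hy : 1 ≤ y) :
    psiPrimeK K x (y ^ ((1 : ℝ) / (NumberField.classNumber K : ℝ))) ≤ psiTildeK K x y := by
  set z := y ^ ((1 : ℝ) / (classNumber K : ℝ))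
  have hz : 1 ≤ z := Real.one_le_rpow hy (by positivity)
  have hzy : (⌊z⌋₊ : ℝ) ^ Nat.card (ClassGroup (𝓞 K)) ≤ y := calc
    (⌊z⌋₊ : ℝ) ^ Nat.card (ClassGroup (𝓞 K)) ≤ z ^ classNumber K := by
      rw [Nat.card_eq_fintype_card]
      exact pow_le_pow_left₀ (Nat.cast_nonneg _) (Nat.floor_le (by positivity)) _
    _ = y := by
      simp only [z, one_div]
      exact Real.rpow_inv_natCast_pow (by positivity) (classNumber_ne_zero K)
  refine Set.ncard_le_ncard ?_ ((Ideal.finite_setOfPred_absNorm_le ⌊x⌋₊).subset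
    fun I hI => Nat.le_floor hI.2.2.1)
  rintro _ ⟨hI0, hI, hIx, s, hs, rfl⟩
  obtain ⟨t, ht, hst⟩ := Ideal.exists_prod_eq_forall_isPrincipal_absNorm_le s
    (fun h0 => hI0 (Multiset.prod_eq_zero h0)) hI (Nat.one_le_floor_iff z |>.mpr hz)
    fun P hP => Nat.le_floor (hs P hP).2
  refine ⟨hI0, hI, hIx, t, fun J hJ => ⟨(ht J hJ).1, le_trans ?_ hzy⟩, hst⟩
  exact_mod_cast (ht J hJ).2

/-- For all `x > 0` and `y ≥ 1`, `ψ'_K(x, y^(1/h)) ≤ ψ̃_K(x, y)`, where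
`h` is the class number of `K`. -/
theorem smoothness_roots_stmt5 (K : Type) [Field K] [NumberField K]
    (x y : ℝ) (hx : 0 < x) (hy : 1 ≤ y) :
    psiPrimeK K x (y ^ ((1 : ℝ) / (NumberField.classNumber K : ℝ))) ≤ psiTildeK K x y :=
  smoothness_roots_stmt5_general K x y hy
end

section
/- Let M ≥ 1 be a real number such that every ideal class of K contains a nonzero integral ideal of norm at most M. Then for all real x > 0 and all real y ≥ M, one has (1/h) · ψ_K(x/M, y) ≤ ψ'_K(x, y), where h is the class number of K. -/
/-!
Choose in every ideal class `C` an integral ideal `J_C` of norm at most `M ≤ y`; its prime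
factors then have norm at most `y`. For an ideal `I` counted by `ψ_K(x/M, y)`, the product
`I · J_{[I]⁻¹}` is principal, `y`-smooth and of norm at most `x`. Since `I` is recovered from
its class together with this product, `ψ_K(x/M, y) ≤ h · ψ'_K(x, y)`.
-/

open NumberField UniqueFactorizationMonoid

open scoped nonZeroDivisors

/-- `ψ_K(x, y)`: the number of nonzero ideals of `𝒪_K` of norm at most `x` that are
products of prime ideals of norm at most `y`. -/
noncomputable def psiK (K : Type) [Field K] [NumberField K] (x y : ℝ) : ℕ :=
  Set.ncard {I : Ideal (𝓞 K) | I ≠ ⊥ ∧ (Ideal.absNorm I : ℝ) ≤ x ∧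
    ∃ s : Multiset (Ideal (𝓞 K)),
      (∀ P ∈ s, P.IsPrime ∧ (Ideal.absNorm P : ℝ) ≤ y) ∧ I = s.prod}

namespace Ideal

variable {S : Type*} [CommRing S] [IsDedekindDomain S]

theorem isPrincipal_mul_of_mk0_eq_inv {I J : (Ideal S)⁰}
    (h : ClassGroup.mk0 J = (ClassGroup.mk0 I)⁻¹) : ((I : Ideal S) * J).IsPrincipal := by
  rw [← ClassGroup.mk0_eq_one_iff (mul_mem I.2 J.2)]
  exact (map_mul ClassGroup.mk0 I J).trans (by rw [h, mul_inv_cancel])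

variable [Module.Free ℤ S]

def IsNormSmooth (y : ℝ) (I : Ideal S) : Prop :=
  ∃ s : Multiset (Ideal S), (∀ P ∈ s, P.IsPrime ∧ (absNorm P : ℝ) ≤ y) ∧ I = s.prod

theorem IsNormSmooth.mul {y : ℝ} {I J : Ideal S} (hI : I.IsNormSmooth y)
    (hJ : J.IsNormSmooth y) : (I * J).IsNormSmooth y := by
  obtain ⟨s, hs, rfl⟩ := hI
  obtain ⟨t, ht, rfl⟩ := hJ
  refine ⟨s + t, fun P hP => ?_, (Multiset.prod_add s t).symm⟩
  rcases Multiset.mem_add.mp hP with h | h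
  exacts [hs P h, ht P h]

variable [Module.Finite ℤ S]

theorem absNorm_le_of_dvd {I J : Ideal S} (hJ : J ≠ ⊥) (h : I ∣ J) : absNorm I ≤ absNorm J :=
  Nat.le_of_dvd (Nat.pos_of_ne_zero (absNorm_eq_zero_iff.not.mpr hJ)) (map_dvd absNorm h)

theorem isNormSmooth_of_absNorm_le {y : ℝ} {J : Ideal S} (hJ : J ≠ ⊥)
    (hy : (absNorm J : ℝ) ≤ y) : J.IsNormSmooth y := by
  refine ⟨normalizedFactors J, fun P hP => ⟨isPrime_of_prime (prime_of_normalized_factor P hP),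
    ?_⟩, (prod_normalizedFactors_eq_self hJ).symm⟩
  exact (Nat.cast_le.mpr (absNorm_le_of_dvd hJ (dvd_of_mem_normalizedFactors hP))).trans hy

theorem ncard_isNormSmooth_le_card_classGroup_mul [CharZero S] [Finite (ClassGroup S)]
    {M x y : ℝ} (hM : 0 < M) (hy : M ≤ y)
    (hrep : ∀ C : ClassGroup S, ∃ J : (Ideal S)⁰,
      ClassGroup.mk0 J = C ∧ (absNorm (J : Ideal S) : ℝ) ≤ M) :
    {I : Ideal S | I ≠ ⊥ ∧ (absNorm I : ℝ) ≤ x / M ∧ I.IsNormSmooth y}.ncard ≤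
      Nat.card (ClassGroup S) *
        {I : Ideal S | I ≠ ⊥ ∧ I.IsPrincipal ∧ (absNorm I : ℝ) ≤ x ∧ I.IsNormSmooth y}.ncard := by
  choose J hJcls hJnorm using hrep
  set A := {I : Ideal S | I ≠ ⊥ ∧ (absNorm I : ℝ) ≤ x / M ∧ I.IsNormSmooth y}
  set B := {I : Ideal S | I ≠ ⊥ ∧ I.IsPrincipal ∧ (absNorm I : ℝ) ≤ x ∧ I.IsNormSmooth y}
  have : Finite B := Set.Finite.to_subtype <|
    (finite_setOfPred_absNorm_le ⌊x⌋₊).subset fun I hI => Nat.le_floor hI.2.2.1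
  let cls (I : A) : ClassGroup S := ClassGroup.mk0 ⟨I, mem_nonZeroDivisors_of_ne_zero I.2.1⟩
  let rep (I : A) : Ideal S := J (cls I)⁻¹
  have hmem (I : A) : (I : Ideal S) * rep I ∈ B := by
    obtain ⟨hI0, hInorm, hIsmooth⟩ := I.2
    have hJ0 : rep I ≠ ⊥ := nonZeroDivisors.coe_ne_zero _
    have hprin := isPrincipal_mul_of_mk0_eq_inv (hJcls (cls I)⁻¹)
    refine ⟨mul_ne_zero hI0 hJ0, hprin, ?_,
      hIsmooth.mul (isNormSmooth_of_absNorm_le hJ0 ((hJnorm _).trans hy))⟩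
    calc (absNorm ((I : Ideal S) * rep I) : ℝ) = absNorm (I : Ideal S) * absNorm (rep I) := by
          rw [map_mul, Nat.cast_mul]
      _ ≤ x / M * M :=
          mul_le_mul hInorm (hJnorm _) (Nat.cast_nonneg _) ((Nat.cast_nonneg _).trans hInorm)
      _ = x := div_mul_cancel₀ x hM.ne'
  let F (I : A) : ClassGroup S × B := (cls I, ⟨_, hmem I⟩)
  have hF : F.Injective := fun I I' h => by
    obtain ⟨hcls, hprod⟩ := Prod.mk.inj h
    have hrep : rep I = rep I' := congrArg (fun C => (J C⁻¹ : Ideal S)) hcls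
    have hprod : (I : Ideal S) * rep I = I' * rep I' := congrArg Subtype.val hprod
    rw [hrep] at hprod
    exact Subtype.ext (mul_right_cancel₀ (nonZeroDivisors.coe_ne_zero (J (cls I')⁻¹)) hprod)
  calc A.ncard = Nat.card A := (Nat.card_coe_set_eq A).symm
    _ ≤ Nat.card (ClassGroup S × B) := Nat.card_le_card_of_injective F hF
    _ = Nat.card (ClassGroup S) * B.ncard := by rw [Nat.card_prod, Nat.card_coe_set_eq]

end Ideal

theorem smoothness_roots_stmt6_general (K : Type) [Field K] [NumberField K]
    (M : ℝ) (hM : 1 ≤ M)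
    (hMrep : ∀ C : ClassGroup (𝓞 K), ∃ I : nonZeroDivisors (Ideal (𝓞 K)),
      ClassGroup.mk0 I = C ∧ (Ideal.absNorm (I : Ideal (𝓞 K)) : ℝ) ≤ M)
    (x y : ℝ) (hy : M ≤ y) :
    (1 / (NumberField.classNumber K : ℝ)) * (psiK K (x / M) y : ℝ)
      ≤ (psiPrimeK K x y : ℝ) := by
  have hcount : psiK K (x / M) y ≤ classNumber K * psiPrimeK K x y := by
    rw [classNumber, ← Nat.card_eq_fintype_card]
    exact Ideal.ncard_isNormSmooth_le_card_classGroup_mul (zero_lt_one.trans_le hM) hy hMrep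
  have hh : (0 : ℝ) < classNumber K := by exact_mod_cast Fintype.card_pos
  rw [one_div, inv_mul_le_iff₀ hh]
  exact_mod_cast hcount

/-- If `M ≥ 1` is such that every ideal class of `K` contains a nonzero
integral ideal of norm at most `M`, then for all `x > 0` and `y ≥ M`,
`(1/h) · ψ_K(x/M, y) ≤ ψ'_K(x, y)`, where `h` is the class number of `K`. -/
theorem smoothness_roots_stmt6 (K : Type) [Field K] [NumberField K]
    (M : ℝ) (hM : 1 ≤ M)
    (hMrep : ∀ C : ClassGroup (𝓞 K), ∃ I : nonZeroDivisors (Ideal (𝓞 K)),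
      ClassGroup.mk0 I = C ∧ (Ideal.absNorm (I : Ideal (𝓞 K)) : ℝ) ≤ M)
    (x y : ℝ) (hx : 0 < x) (hy : M ≤ y) :
    (1 / (NumberField.classNumber K : ℝ)) * (psiK K (x / M) y : ℝ)
      ≤ (psiPrimeK K x y : ℝ) :=
  smoothness_roots_stmt6_general K M hM hMrep x y hy
end

section
/- Let ω = (ω₁, …, ω_d) be an integral basis of 𝒪_K, where d is the degree of K. There is a positive constant c₃ depending only on K and ω such that for every nonzero η ∈ 𝒪_K there exists η̃ ∈ 𝒪_K generating the same principal ideal as η (i.e., η̃ = uη for some unit u of 𝒪_K) whose coordinates a₁, …, a_d in the basis ω satisfy |a_i| ≤ c₃ · N((η))^(1/d) for all 1 ≤ i ≤ d. -/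
/-!
Multiplying `η` by a unit moves its image in the mixed space `ℝ^{r₁} × ℂ^{r₂}` into Mathlib's
fundamental cone for the action of the units (Dirichlet's unit theorem) without changing the
norm `N((η))`. The cone is stable under real scaling, its part of norm `≤ 1` is bounded, and the
norm is homogeneous of degree `d`, so every point of the cone has sup norm at most `c · N^{1/d}`.
Finally, `ω` is also an `ℝ`-basis of the mixed space, and coordinates in a basis of a
finite-dimensional normed space are bounded by a multiple of the norm.
-/

open Module

theorem Module.Basis.exists_abs_repr_le_mul_norm {E ι : Type*} [NormedAddCommGroup E]
    [NormedSpace ℝ E] [FiniteDimensional ℝ E] [Fintype ι] (B : Basis ι ℝ E) :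
    ∃ C : ℝ, 0 ≤ C ∧ ∀ x i, |B.repr x i| ≤ C * ‖x‖ := by
  let f := LinearMap.toContinuousLinearMap B.equivFun.toLinearMap
  refine ⟨‖f‖, norm_nonneg f, fun x i => ?_⟩
  calc |B.repr x i| = ‖f x i‖ := rfl
    _ ≤ ‖f x‖ := norm_le_pi_norm (f x) i
    _ ≤ ‖f‖ * ‖x‖ := f.le_opNorm x

namespace NumberField.mixedEmbedding

open scoped Classical

variable {K : Type*} [Field K] [NumberField K]

theorem exists_norm_le_mul_norm_rpow_of_mem_fundamentalCone :
    ∃ c : ℝ, 0 < c ∧ ∀ y ∈ fundamentalCone K,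
      ‖y‖ ≤ c * mixedEmbedding.norm y ^ ((1 : ℝ) / finrank ℚ K) := by
  obtain ⟨R, hR⟩ := isBounded_iff_forall_norm_le.mp (fundamentalCone.isBounded_normLeOne K)
  refine ⟨max R 1, by positivity, fun y hy => ?_⟩
  have hN := fundamentalCone.norm_pos_of_mem hy
  set r := mixedEmbedding.norm y ^ ((1 : ℝ) / finrank ℚ K)
  have hr : 0 < r := by positivity
  have hscaled : r⁻¹ • y ∈ fundamentalCone.normLeOne K := by
    refine fundamentalCone.mem_normLeOne.mpr
      ⟨fundamentalCone.smul_mem_of_mem hy (inv_ne_zero hr.ne'), le_of_eq ?_⟩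
    rw [mixedEmbedding.norm_smul, abs_inv, abs_of_pos hr, inv_pow, ← Real.rpow_natCast r,
      ← Real.rpow_mul hN.le, one_div_mul_cancel (Nat.cast_ne_zero.mpr finrank_pos.ne'),
      Real.rpow_one, inv_mul_cancel₀ hN.ne']
  calc ‖y‖ = r * ‖r⁻¹ • y‖ := by
        rw [_root_.norm_smul, norm_inv, Real.norm_of_nonneg hr.le, mul_inv_cancel_left₀ hr.ne']
    _ ≤ r * max R 1 := by gcongr; exact (hR _ hscaled).trans (le_max_left _ _)
    _ = max R 1 * r := mul_comm _ _

theorem norm_mixedEmbedding_eq_absNorm_span (η : 𝓞 K) :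
    mixedEmbedding.norm (mixedEmbedding K η) = Ideal.absNorm (Ideal.span {η}) := by
  rw [norm_eq_norm, Ideal.absNorm_span_singleton, ← Algebra.coe_norm_int, Nat.cast_natAbs]
  push_cast
  rfl

theorem exists_unit_mul_norm_mixedEmbedding_le :
    ∃ c : ℝ, 0 < c ∧ ∀ η : 𝓞 K, η ≠ 0 → ∃ u : (𝓞 K)ˣ,
      ‖mixedEmbedding K (u * η : 𝓞 K)‖ ≤
        c * (Ideal.absNorm (Ideal.span {η}) : ℝ) ^ ((1 : ℝ) / finrank ℚ K) := by
  obtain ⟨c, hc, hcone⟩ := exists_norm_le_mul_norm_rpow_of_mem_fundamentalCone (K := K)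
  refine ⟨c, hc, fun η hη => ?_⟩
  have hnorm := norm_mixedEmbedding_eq_absNorm_span η
  obtain ⟨u, hu⟩ := fundamentalCone.exists_unit_smul_mem (x := mixedEmbedding K η) <| by
    rwa [hnorm, Nat.cast_ne_zero, Ne, Ideal.absNorm_eq_zero_iff, Ideal.span_singleton_eq_bot]
  refine ⟨u, ?_⟩
  rw [← hnorm, ← norm_unit_smul u]
  rw [unit_smul_eq_iff_mul_eq.mpr rfl] at hu ⊢
  exact hcone _ hu

variable (K) in
noncomputable def integerLatticeEquiv : 𝓞 K ≃ₗ[ℤ] mixedEmbedding.integerLattice K :=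
  LinearEquiv.ofInjective _ ((mixedEmbedding_injective K).comp RingOfIntegers.coe_injective)

variable {ι : Type*}

noncomputable def basisOfIntegralBasis (ω : Basis ι ℤ (𝓞 K)) : Basis ι ℝ (mixedSpace K) :=
  (ω.map (integerLatticeEquiv K)).ofZLatticeBasis ℝ (mixedEmbedding.integerLattice K)

theorem basisOfIntegralBasis_repr_mixedEmbedding (ω : Basis ι ℤ (𝓞 K)) (α : 𝓞 K) (i : ι) :
    (basisOfIntegralBasis ω).repr (mixedEmbedding K α) i = ω.repr α i := by
  have := Basis.ofZLatticeBasis_repr_apply ℝ (mixedEmbedding.integerLattice K)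
    (ω.map (integerLatticeEquiv K)) (integerLatticeEquiv K α) i
  rwa [Basis.map_repr, LinearEquiv.trans_apply, LinearEquiv.symm_apply_apply] at this

theorem exists_abs_repr_le_mul_norm_mixedEmbedding [Fintype ι] (ω : Basis ι ℤ (𝓞 K)) :
    ∃ C : ℝ, 0 ≤ C ∧ ∀ α i, |(ω.repr α i : ℝ)| ≤ C * ‖mixedEmbedding K α‖ := by
  obtain ⟨C, hC, hrepr⟩ := (basisOfIntegralBasis ω).exists_abs_repr_le_mul_norm
  exact ⟨C, hC, fun α i => basisOfIntegralBasis_repr_mixedEmbedding ω α i ▸ hrepr _ i⟩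

end NumberField.mixedEmbedding

open NumberField

theorem smoothness_roots_stmt7_general (K : Type) [Field K] [NumberField K]
    (d : ℕ)
    (ω : Module.Basis (Fin d) ℤ (𝓞 K)) :
    ∃ c₃ : ℝ, 0 < c₃ ∧ ∀ η : 𝓞 K, η ≠ 0 →
      ∃ η' : 𝓞 K, (∃ u : (𝓞 K)ˣ, η' = u * η) ∧
        ∀ i : Fin d, |(ω.repr η' i : ℝ)| ≤
          c₃ * (Ideal.absNorm (Ideal.span {η}) : ℝ) ^ ((1 : ℝ) / (d : ℝ)) := by
  classical
  obtain rfl : d = finrank ℚ K := by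
    rw [← RingOfIntegers.rank K, finrank_eq_card_basis ω, Fintype.card_fin]
  obtain ⟨C, hC, hcoord⟩ := mixedEmbedding.exists_abs_repr_le_mul_norm_mixedEmbedding ω
  obtain ⟨c, hc, hunit⟩ := mixedEmbedding.exists_unit_mul_norm_mixedEmbedding_le (K := K)
  refine ⟨C * c + 1, by positivity, fun η hη => ?_⟩
  obtain ⟨u, hu⟩ := hunit η hη
  refine ⟨u * η, ⟨u, rfl⟩, fun i => ?_⟩
  calc |(ω.repr (u * η) i : ℝ)|
      ≤ C * ‖mixedEmbedding K (u * η : 𝓞 K)‖ := hcoord _ i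
    _ ≤ C * (c * (Ideal.absNorm (Ideal.span {η}) : ℝ) ^ ((1 : ℝ) / finrank ℚ K)) := by gcongr
    _ ≤ (C * c + 1) * (Ideal.absNorm (Ideal.span {η}) : ℝ) ^ ((1 : ℝ) / finrank ℚ K) := by
      rw [← mul_assoc]
      gcongr
      linarith

/-- Fincke, Pohst. Let `ω = (ω₁, …, ω_d)` be an integral basis of
`𝒪_K`, `d` the degree of `K`.  There is a constant `c₃ = c₃(K, ω) > 0` such that every
nonzero `η ∈ 𝒪_K` has an associate `η̃` whose coordinates `aᵢ` in the basis `ω` satisfy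
`|aᵢ| ≤ c₃ · N((η))^(1/d)`. -/
theorem smoothness_roots_stmt7 (K : Type) [Field K] [NumberField K]
    (d : ℕ) (hd : d = Module.finrank ℚ K)
    (ω : Module.Basis (Fin d) ℤ (𝓞 K)) :
    ∃ c₃ : ℝ, 0 < c₃ ∧ ∀ η : 𝓞 K, η ≠ 0 →
      ∃ η' : 𝓞 K, (∃ u : (𝓞 K)ˣ, η' = u * η) ∧
        ∀ i : Fin d, |(ω.repr η' i : ℝ)| ≤
          c₃ * (Ideal.absNorm (Ideal.span {η}) : ℝ) ^ ((1 : ℝ) / (d : ℝ)) :=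
  smoothness_roots_stmt7_general K d ω
end

section
/- Let p be a prime and let g ∈ 𝔽_p[Y] be a product of k distinct monic irreducible polynomials, each of degree e. Then the group G = {a ∈ (𝔽_p[Y]/(g))^* : a^(p−1) = 1} has exactly (p−1)^k elements. -/
/-!
By the Chinese remainder theorem `𝔽_p[Y]/(g)` is the product of the `k` fields `𝔽_p[Y]/(q)`,
so its `(p-1)`-th roots of unity are the product of theirs. In each of these fields the
`(p-1)`-th roots of unity are exactly `𝔽_p^×`: Fermat's little theorem puts `𝔽_p^×` among
them, and a domain has at most `p - 1` of them.
-/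

open Polynomial

noncomputable def Ideal.quotientSpanProdRingEquivPi {R : Type*} [CommRing R] (s : Finset R)
    (hs : (s : Set R).Pairwise IsCoprime) :
    R ⧸ Ideal.span {∏ q ∈ s, q} ≃+* Π q : s, R ⧸ Ideal.span {(q : R)} :=
  have hcop : Pairwise fun q r : s => IsCoprime (q : R) r :=
    fun q r hqr => hs q.2 r.2 (Subtype.coe_injective.ne hqr)
  (Ideal.quotEquivOfEq <| by
      rw [Ideal.iInf_span_singleton fun q r hqr => hcop hqr]
      exact congrArg (fun x => Ideal.span {x}) (Finset.prod_coe_sort s fun q => q)).symm.trans <|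
    Ideal.quotientInfRingEquivPiQuotient _ fun q r hqr =>
      (Ideal.isCoprime_span_singleton_iff _ _).2 (hcop hqr)

theorem card_rootsOfUnity_congr {M N : Type*} [CommMonoid M] [CommMonoid N] (σ : M ≃* N)
    (n : ℕ) : Nat.card (rootsOfUnity n M) = Nat.card (rootsOfUnity n N) :=
  Nat.card_congr (σ.restrictRootsOfUnity n).toEquiv

theorem card_rootsOfUnity_pi {ι : Type*} [Fintype ι] (M : ι → Type*) [∀ i, CommMonoid (M i)]
    (n : ℕ) : Nat.card (rootsOfUnity n (Π i, M i)) = ∏ i, Nat.card (rootsOfUnity n (M i)) := by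
  rw [← Nat.card_pi]
  refine Nat.card_congr <| (MulEquiv.piUnits.toEquiv.subtypeEquiv fun u => ?_).trans
    (Equiv.subtypePiEquivPi (p := fun i (v : (M i)ˣ) => v ∈ rootsOfUnity n (M i)))
  simp [Units.ext_iff, funext_iff]

theorem card_rootsOfUnity_sub_one_of_algebra_zmod (p : ℕ) [Fact p.Prime] (R : Type*)
    [CommRing R] [IsDomain R] [Algebra (ZMod p) R] :
    Nat.card (rootsOfUnity (p - 1) R) = p - 1 := by
  have : NeZero (p - 1) := ⟨Nat.sub_ne_zero_of_lt (Fact.out : p.Prime).one_lt⟩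
  refine le_antisymm (card_rootsOfUnity R (p - 1)) ?_
  let ι : (ZMod p)ˣ →* rootsOfUnity (p - 1) R :=
    (Units.map (algebraMap (ZMod p) R).toMonoidHom).codRestrict _ fun u => by
      rw [mem_rootsOfUnity, ← map_pow, ZMod.units_pow_card_sub_one_eq_one, map_one]
  have hι : Function.Injective ι := fun u v h =>
    Units.ext <| (algebraMap (ZMod p) R).injective <| Units.ext_iff.1 <| Subtype.ext_iff.1 h
  calc p - 1 = Nat.card (ZMod p)ˣ := by rw [Nat.card_eq_fintype_card, ZMod.card_units]
    _ ≤ _ := Nat.card_le_card_of_injective ι hι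

namespace Polynomial

variable {K : Type*} [Field K]

theorem isCoprime_of_monic_of_irreducible_of_ne {a b : K[X]} (ha : a.Monic) (hia : Irreducible a)
    (hb : b.Monic) (hib : Irreducible b) (hab : a ≠ b) : IsCoprime a b :=
  hia.coprime_iff_not_dvd.2 fun h =>
    hab (eq_of_monic_of_associated ha hb (hia.associated_of_dvd hib h))

theorem isDomain_quotient_span_of_irreducible {q : K[X]} (hq : Irreducible q) :
    IsDomain (K[X] ⧸ Ideal.span {q}) :=
  (Ideal.Quotient.isDomain_iff_prime _).2 <| (Ideal.span_singleton_prime hq.ne_zero).2 hq.prime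

end Polynomial

/-- Let `p` be a prime and `g ∈ 𝔽_p[Y]` a product of `k` distinct monic
irreducible polynomials, each of degree `e`.  Then the group
`G = {a ∈ (𝔽_p[Y]/(g))^* : a^(p−1) = 1}` has exactly `(p−1)^k` elements. -/
theorem smoothness_roots_stmt10
    (p : ℕ) (hp : p.Prime) (k e : ℕ)
    (s : Finset (Polynomial (ZMod p))) (hcard : s.card = k)
    (hs : ∀ q ∈ s, q.Monic ∧ Irreducible q ∧ q.natDegree = e)
    (g : Polynomial (ZMod p)) (hg : g = ∏ q ∈ s, q) :
    Nat.card {a : (Polynomial (ZMod p) ⧸ Ideal.span {g})ˣ | a ^ (p - 1) = 1}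
      = (p - 1) ^ k := by
  have : Fact p.Prime := ⟨hp⟩
  have hcop : (s : Set (ZMod p)[X]).Pairwise IsCoprime := fun q hq r hr hqr =>
    isCoprime_of_monic_of_irreducible_of_ne (hs q hq).1 (hs q hq).2.1 (hs r hr).1 (hs r hr).2.1 hqr
  have hfactor (q : s) :
      Nat.card (rootsOfUnity (p - 1) ((ZMod p)[X] ⧸ Ideal.span {(q : (ZMod p)[X])})) = p - 1 :=
    have := isDomain_quotient_span_of_irreducible (hs q q.2).2.1
    card_rootsOfUnity_sub_one_of_algebra_zmod p _
  subst hg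
  change Nat.card (rootsOfUnity (p - 1) _) = _
  rw [card_rootsOfUnity_congr (Ideal.quotientSpanProdRingEquivPi s hcop).toMulEquiv,
    card_rootsOfUnity_pi, Fintype.prod_congr _ _ hfactor, Finset.prod_const,
    Finset.card_univ, Fintype.card_coe, hcard]
end

section
/- Let p be a prime and let g ∈ 𝔽_p[Y] be a product of k distinct monic irreducible polynomials, each of degree e. Consider the group homomorphism σ : (𝔽_p[Y]/(g))^* → (𝔽_p[Y]/(g))^* given by σ(a) = a^((p^e−1)/(p−1)). Then the kernel of σ has exactly ((p^e−1)/(p−1))^k elements, and the image of σ equals the subgroup G = {a ∈ (𝔽_p[Y]/(g))^* : a^(p−1) = 1}. -/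
/-!
By the Chinese remainder theorem `R_g ≅ ∏ 𝔽_p[Y]/(q)`, a product of `k` fields with `p^e`
elements, so `R_g^*` is a product of `k` cyclic groups of order `N = p^e - 1`. In a cyclic group
of order `N` the kernel of `x ↦ x^d` has `d` elements for every `d ∣ N`; hence with
`m = N / (p - 1)` the kernel of `σ` has `m^k` elements, its image has `N^k / m^k = (p-1)^k`
elements, and it lies in `G` (as `x^(m(p-1)) = x^N = 1`), which also has `(p-1)^k` elements.
-/

open Polynomial

theorem MulEquiv.card_ker_powMonoidHom {G H : Type*} [CommGroup G] [CommGroup H] (φ : G ≃* H)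
    (d : ℕ) :
    Nat.card (powMonoidHom d : G →* G).ker = Nat.card (powMonoidHom d : H →* H).ker :=
  Nat.card_congr <| φ.toEquiv.subtypeEquiv fun x => by
    simp [MonoidHom.mem_ker, ← map_pow, φ.map_eq_one_iff]

theorem Pi.card_ker_powMonoidHom {ι : Type*} [Fintype ι] {G : ι → Type*}
    [∀ i, CommGroup (G i)] (d : ℕ) :
    Nat.card (powMonoidHom d : (∀ i, G i) →* ∀ i, G i).ker =
      ∏ i, Nat.card (powMonoidHom d : G i →* G i).ker := by
  rw [← Nat.card_pi]
  exact Nat.card_congr <| (Equiv.subtypeEquivRight fun x => by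
    simp [MonoidHom.mem_ker, funext_iff]).trans Equiv.subtypePiEquivPi

theorem Pi.card_ker_powMonoidHom_of_isCyclic {ι : Type*} [Fintype ι] {G : ι → Type*}
    [∀ i, CommGroup (G i)] [∀ i, Finite (G i)] [∀ i, IsCyclic (G i)] {d : ℕ}
    (hd : ∀ i, d ∣ Nat.card (G i)) :
    Nat.card (powMonoidHom d : (∀ i, G i) →* ∀ i, G i).ker = d ^ Fintype.card ι := by
  simp_rw [Pi.card_ker_powMonoidHom, IsCyclic.card_powMonoidHom_ker, Nat.gcd_eq_right (hd _),
    Finset.prod_const, Finset.card_univ]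

theorem range_powMonoidHom_eq_ker {G : Type*} [CommGroup G] [Finite G] {a b : ℕ}
    (hexp : ∀ x : G, x ^ (a * b) = 1)
    (hcard : Nat.card (powMonoidHom a : G →* G).ker * Nat.card (powMonoidHom b : G →* G).ker =
      Nat.card G) :
    (powMonoidHom a : G →* G).range = (powMonoidHom b : G →* G).ker := by
  refine Subgroup.eq_of_le_of_card_ge ?_ (le_of_eq ?_)
  · rintro _ ⟨x, rfl⟩
    simp [MonoidHom.mem_ker, ← pow_mul, hexp]
  · rw [← Subgroup.index_ker]
    refine Nat.eq_of_mul_eq_mul_left (Nat.card_pos (α := (powMonoidHom a : G →* G).ker)) ?_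
    rw [Subgroup.card_mul_index, hcard]

namespace Polynomial

variable {K : Type*} [Field K]

theorem pairwise_isCoprime_of_monic_irreducible {s : Finset K[X]}
    (hs : ∀ q ∈ s, q.Monic ∧ Irreducible q) : Pairwise fun i j : s => IsCoprime (i : K[X]) j := by
  intro i j hij
  rw [(hs i i.2).2.coprime_iff_not_dvd]
  intro hdvd
  exact hij <| Subtype.ext <| eq_of_monic_of_associated (hs i i.2).1 (hs j j.2).1
    ((hs i i.2).2.associated_of_dvd (hs j j.2).2 hdvd)

noncomputable def quotientProdEquivPiAdjoinRoot {s : Finset K[X]}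
    (hs : ∀ q ∈ s, q.Monic ∧ Irreducible q) :
    K[X] ⧸ Ideal.span {∏ q ∈ s, q} ≃+* ∀ q : s, AdjoinRoot (q : K[X]) :=
  (Ideal.quotEquivOfEq <| by
      rw [← Finset.prod_coe_sort s, ← Ideal.iInf_span_singleton fun i j hij =>
        pairwise_isCoprime_of_monic_irreducible hs hij]).trans <|
    Ideal.quotientInfRingEquivPiQuotient _ fun i j hij =>
      (Ideal.isCoprime_span_singleton_iff _ _).mpr (pairwise_isCoprime_of_monic_irreducible hs hij)

theorem natCard_adjoinRoot [Finite K] {q : K[X]} (hq : q.Monic) :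
    Nat.card (AdjoinRoot q) = Nat.card K ^ q.natDegree := by
  have := hq.finite_adjoinRoot
  rw [Module.natCard_eq_pow_finrank (K := K), (AdjoinRoot.powerBasis hq.ne_zero).finrank,
    AdjoinRoot.powerBasis_dim]

theorem natCard_units_adjoinRoot [Finite K] {q : K[X]} [Fact (Irreducible q)] (hq : q.Monic) :
    Nat.card (AdjoinRoot q)ˣ = Nat.card K ^ q.natDegree - 1 := by
  rw [Nat.card_units, natCard_adjoinRoot hq]

noncomputable def unitsQuotientProdEquivPi {s : Finset K[X]}
    (hs : ∀ q ∈ s, q.Monic ∧ Irreducible q) :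
    (K[X] ⧸ Ideal.span {∏ q ∈ s, q})ˣ ≃* ∀ q : s, (AdjoinRoot (q : K[X]))ˣ :=
  (Units.mapEquiv (quotientProdEquivPiAdjoinRoot hs).toMulEquiv).trans MulEquiv.piUnits

variable [Finite K] {s : Finset K[X]} {e : ℕ}

theorem natCard_units_quotient_prod (hs : ∀ q ∈ s, q.Monic ∧ Irreducible q ∧ q.natDegree = e) :
    Nat.card (K[X] ⧸ Ideal.span {∏ q ∈ s, q})ˣ = (Nat.card K ^ e - 1) ^ s.card := by
  have (q : s) : Fact (Irreducible (q : K[X])) := ⟨(hs q q.2).2.1⟩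
  rw [Nat.card_congr (unitsQuotientProdEquivPi fun q hq => (hs q hq).imp_right And.left).toEquiv,
    Nat.card_pi, Finset.prod_congr rfl fun (q : s) _ => natCard_units_adjoinRoot (hs q q.2).1]
  simp [(hs _ _).2.2]

theorem card_ker_powMonoidHom_units_quotient_prod
    (hs : ∀ q ∈ s, q.Monic ∧ Irreducible q ∧ q.natDegree = e) {d : ℕ}
    (hd : d ∣ Nat.card K ^ e - 1) :
    Nat.card (powMonoidHom (α := (K[X] ⧸ Ideal.span {∏ q ∈ s, q})ˣ) d).ker = d ^ s.card := by
  have (q : s) : Fact (Irreducible (q : K[X])) := ⟨(hs q q.2).2.1⟩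
  have (q : s) : Finite (AdjoinRoot (q : K[X])) :=
    have := (hs q q.2).1.finite_adjoinRoot
    Module.finite_of_finite K
  rw [(unitsQuotientProdEquivPi fun q hq => (hs q hq).imp_right And.left).card_ker_powMonoidHom,
    Pi.card_ker_powMonoidHom_of_isCyclic, Fintype.card_coe]
  intro q
  rwa [natCard_units_adjoinRoot (hs q q.2).1, (hs q q.2).2.2]

end Polynomial

/-- Let `p` be a prime and `g ∈ 𝔽_p[Y]` a product of `k` distinct monic
irreducible polynomials, each of degree `e`.  For the homomorphism
`σ : a ↦ a^((p^e−1)/(p−1))` of `(𝔽_p[Y]/(g))^*`, the kernel of `σ` has exactly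
`((p^e−1)/(p−1))^k` elements and the range of `σ` is `G = {a : a^(p−1) = 1}`. -/
theorem smoothness_roots_stmt11
    (p : ℕ) (hp : p.Prime) (k e : ℕ)
    (s : Finset (Polynomial (ZMod p))) (hcard : s.card = k)
    (hs : ∀ q ∈ s, q.Monic ∧ Irreducible q ∧ q.natDegree = e)
    (g : Polynomial (ZMod p)) (hg : g = ∏ q ∈ s, q) :
    Nat.card
        (@powMonoidHom (Polynomial (ZMod p) ⧸ Ideal.span {g})ˣ _
          ((p ^ e - 1) / (p - 1))).ker
      = ((p ^ e - 1) / (p - 1)) ^ k ∧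
    (@powMonoidHom (Polynomial (ZMod p) ⧸ Ideal.span {g})ˣ _
        ((p ^ e - 1) / (p - 1))).range
      = (@powMonoidHom (Polynomial (ZMod p) ⧸ Ideal.span {g})ˣ _ (p - 1)).ker := by
  have : Fact p.Prime := ⟨hp⟩
  subst hg hcard
  have : Finite ((ZMod p)[X] ⧸ Ideal.span {∏ q ∈ s, q}) :=
    have := (monic_prod_of_monic _ _ fun q hq => (hs q hq).1).finite_quotient
    Module.finite_of_finite (ZMod p)
  have hker {d : ℕ} (hd : d ∣ p ^ e - 1) :
      Nat.card (powMonoidHom (α := ((ZMod p)[X] ⧸ Ideal.span {∏ q ∈ s, q})ˣ) d).ker =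
        d ^ s.card :=
    card_ker_powMonoidHom_units_quotient_prod hs (by rwa [Nat.card_zmod])
  have hcardG := natCard_units_quotient_prod hs
  rw [Nat.card_zmod] at hcardG
  have hdvd : p - 1 ∣ p ^ e - 1 := by simpa using Nat.sub_dvd_pow_sub_pow p 1 e
  have hm : (p ^ e - 1) / (p - 1) * (p - 1) = p ^ e - 1 := Nat.div_mul_cancel hdvd
  refine ⟨hker (Dvd.intro _ hm), range_powMonoidHom_eq_ker (fun x => ?_) ?_⟩
  · have htop := Subgroup.eq_top_of_card_eq _ ((hker dvd_rfl).trans hcardG.symm)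
    simpa [hm] using htop.ge (Subgroup.mem_top x)
  · rw [hker (Dvd.intro _ hm), hker hdvd, ← mul_pow, hm, hcardG]
end
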